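/- arXiv:1907.04012 — 3 statements merged into one kernel-verified Lean document; each statement's English description precedes it below -/
import Mathlib

section
/- Let q ≥ 1. There exists a constant c_q ≥ 2 depending only on q such that for every g ∈ H¹ with r^{q−1}g ∈ L² that is localized to the angular frequency band k for some integer k ≥ 1, and for every σ > 0, (1/c_q) σ^{1/q} ‖r^{q−2} g‖² ≤ σ ‖∇g‖² + ‖r^{q−1} g‖². -/
open MeasureTheory Real Set

noncomputable section

/-- Integration domain `(0,∞) × (0,2π]` in the `(r,θ)` plane. -/
def domRT : Set (ℝ × ℝ) := (Set.Ioi (0:ℝ)) ×ˢ (Set.Ioc (0:ℝ) (2*π))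

/-- Squared `L²` norm with respect to the measure `r dr dθ`. -/
def nrm2 (g : ℝ → ℝ → ℝ) : ℝ := ∫ p in domRT, (g p.1 p.2)^2 * p.1

/-- Inner product with respect to the measure `r dr dθ`. -/
def inr2 (g h : ℝ → ℝ → ℝ) : ℝ := ∫ p in domRT, g p.1 p.2 * h p.1 p.2 * p.1

/-- Radial partial derivative. -/
def pdr (g : ℝ → ℝ → ℝ) : ℝ → ℝ → ℝ := fun r θ => deriv (fun x => g x θ) r

/-- Angular partial derivative. -/
def pdt (g : ℝ → ℝ → ℝ) : ℝ → ℝ → ℝ := fun r θ => deriv (fun x => g r x) θ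

/-- Squared `L²` norm of the polar gradient `∇g = (∂_r g, r⁻¹ ∂_θ g)`. -/
def gnrm2 (g : ℝ → ℝ → ℝ) : ℝ := nrm2 (pdr g) + nrm2 (fun r θ => pdt g r θ / r)

/-- Polar Laplacian `Δg = ∂_rr g + r⁻¹ ∂_r g + r⁻² ∂_θθ g`. -/
def plap (g : ℝ → ℝ → ℝ) : ℝ → ℝ → ℝ :=
  fun r θ => pdr (pdr g) r θ + pdr g r θ / r + pdt (pdt g) r θ / r^2

/-! With `c = 2` (the inequality even holds with constant `1`). Pointwise, weighted AM-GM with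
weights `1/q` and `1 - 1/q` gives `σ^{1/q} r^{2q-4} ≤ σ r^{-2} + r^{2q-2}`, hence
`σ^{1/q} ‖r^{q-2} g‖² ≤ σ ‖g/r‖² + ‖r^{q-1} g‖²`. On each circle `g` is a single Fourier mode of
frequency `k ≥ 1`, so `∫ |∂_θ g|² dθ = k² ∫ |g|² dθ ≥ ∫ |g|² dθ`; integrating in `r` gives
`‖g/r‖² ≤ ‖r⁻¹ ∂_θ g‖² ≤ ‖∇g‖²`. This last comparison is done for lower Lebesgue integrals,
since `g/r` is not known in advance to be square integrable. -/

lemma integral_cos_nat_mul_zero_two_pi {n : ℕ} (hn : n ≠ 0) :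
    ∫ θ in (0:ℝ)..2 * π, cos (n * θ) = 0 := by
  have hn' : (n : ℝ) ≠ 0 := Nat.cast_ne_zero.mpr hn
  rw [intervalIntegral.integral_comp_mul_left (fun x => cos x) hn', integral_cos,
    show (n : ℝ) * (2 * π) = (2 * n : ℕ) * π by push_cast; ring, sin_nat_mul_pi]
  simp

lemma integral_sin_nat_mul_zero_two_pi (n : ℕ) :
    ∫ θ in (0:ℝ)..2 * π, sin (n * θ) = 0 := by
  rcases eq_or_ne n 0 with rfl | hn
  · simp
  have hn' : (n : ℝ) ≠ 0 := Nat.cast_ne_zero.mpr hn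
  rw [intervalIntegral.integral_comp_mul_left (fun x => sin x) hn', integral_sin,
    show (n : ℝ) * (2 * π) = (n : ℕ) * (2 * π) by ring, cos_nat_mul_two_pi]
  simp

lemma integral_cos_add_sin_sq {k : ℕ} (hk : k ≠ 0) (a b : ℝ) :
    ∫ θ in (0:ℝ)..2 * π, (a * cos (k * θ) + b * sin (k * θ)) ^ 2 = π * (a ^ 2 + b ^ 2) := by
  have h2k : 2 * k ≠ 0 := by omega
  have hexpand : ∀ θ : ℝ, (a * cos (k * θ) + b * sin (k * θ)) ^ 2 =
      (a ^ 2 + b ^ 2) / 2 + ((a ^ 2 - b ^ 2) / 2 * cos ((2 * k : ℕ) * θ)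
        + a * b * sin ((2 * k : ℕ) * θ)) := by
    intro θ
    have h : ((2 * k : ℕ) : ℝ) * θ = 2 * (k * θ) := by push_cast; ring
    rw [h, cos_two_mul, sin_two_mul]
    linear_combination b ^ 2 * sin_sq_add_cos_sq ((k : ℝ) * θ)
  simp_rw [hexpand]
  rw [intervalIntegral.integral_add intervalIntegrable_const
      (Continuous.intervalIntegrable (by fun_prop) _ _),
    intervalIntegral.integral_add (Continuous.intervalIntegrable (by fun_prop) _ _)
      (Continuous.intervalIntegrable (by fun_prop) _ _),
    intervalIntegral.integral_const_mul, intervalIntegral.integral_const_mul,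
    integral_cos_nat_mul_zero_two_pi h2k, integral_sin_nat_mul_zero_two_pi]
  simp
  ring

lemma hasDerivAt_cos_add_sin (k a b θ : ℝ) :
    HasDerivAt (fun x => a * cos (k * x) + b * sin (k * x))
      (k * b * cos (k * θ) + -(k * a) * sin (k * θ)) θ := by
  have hkx : HasDerivAt (fun x : ℝ => k * x) k θ := by
    simpa using (hasDerivAt_id θ).const_mul k
  exact ((((hasDerivAt_cos _).comp θ hkx).const_mul a).add
    (((hasDerivAt_sin _).comp θ hkx).const_mul b)).congr_deriv (by ring)

lemma setIntegral_sq_le_setIntegral_deriv_sq {k : ℕ} (hk : k ≠ 0) (a b : ℝ) :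
    ∫ θ in Ioc 0 (2 * π), (a * cos (k * θ) + b * sin (k * θ)) ^ 2 ≤
      ∫ θ in Ioc 0 (2 * π), deriv (fun x => a * cos (k * x) + b * sin (k * x)) θ ^ 2 := by
  simp_rw [(hasDerivAt_cos_add_sin _ a b _).deriv]
  rw [← intervalIntegral.integral_of_le two_pi_pos.le,
    ← intervalIntegral.integral_of_le two_pi_pos.le, integral_cos_add_sin_sq hk,
    integral_cos_add_sin_sq hk]
  have hk1 : (1 : ℝ) ≤ k := by exact_mod_cast Nat.one_le_iff_ne_zero.mpr hk
  have hk2 : (1 : ℝ) ≤ (k : ℝ) ^ 2 := one_le_pow₀ hk1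
  calc π * (a ^ 2 + b ^ 2) ≤ (k : ℝ) ^ 2 * (π * (a ^ 2 + b ^ 2)) :=
        le_mul_of_one_le_left (by positivity) hk2
    _ = _ := by ring

lemma continuous_pdt {g : ℝ → ℝ → ℝ} (hg : ContDiff ℝ 1 (fun p : ℝ × ℝ => g p.1 p.2)) :
    Continuous (fun p : ℝ × ℝ => pdt g p.1 p.2) := by
  have hpdt : ∀ p : ℝ × ℝ, pdt g p.1 p.2 = fderiv ℝ (fun p : ℝ × ℝ => g p.1 p.2) p (0, 1) := by
    intro p
    have hslice : HasDerivAt (fun x : ℝ => (p.1, x)) (0, 1) p.2 :=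
      (hasDerivAt_const p.2 p.1).prodMk (hasDerivAt_id p.2)
    exact (((hg.differentiable one_ne_zero) _).hasFDerivAt.comp_hasDerivAt p.2 hslice).deriv
  simp_rw [hpdt]
  exact (hg.continuous_fderiv one_ne_zero).clm_apply continuous_const

lemma measurableSet_domRT : MeasurableSet domRT :=
  measurableSet_Ioi.prod measurableSet_Ioc

lemma ae_domRT_fst_pos : ∀ᵐ p ∂volume.restrict domRT, 0 < p.1 :=
  ae_restrict_of_forall_mem measurableSet_domRT fun _ hp => hp.1

lemma nrm2_nonneg (g : ℝ → ℝ → ℝ) : 0 ≤ nrm2 g :=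
  setIntegral_nonneg measurableSet_domRT fun _ hp => mul_nonneg (sq_nonneg _) (le_of_lt hp.1)

lemma volume_restrict_domRT :
    volume.restrict domRT = (volume.restrict (Ioi 0)).prod (volume.restrict (Ioc 0 (2 * π))) := by
  rw [domRT, Measure.prod_restrict, ← Measure.volume_eq_prod]

lemma setLIntegral_domRT_mono {F G : ℝ × ℝ → ENNReal} (hF : Measurable F) (hG : Measurable G)
    (h : ∀ r > 0, ∫⁻ θ in Ioc 0 (2 * π), F (r, θ) ≤ ∫⁻ θ in Ioc 0 (2 * π), G (r, θ)) :
    ∫⁻ p in domRT, F p ≤ ∫⁻ p in domRT, G p := by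
  rw [volume_restrict_domRT, lintegral_prod _ hF.aemeasurable, lintegral_prod _ hG.aemeasurable]
  exact setLIntegral_mono' measurableSet_Ioi h

lemma setLIntegral_sq_div_le_setLIntegral_pdt_sq_div {g : ℝ → ℝ → ℝ} {k : ℕ} (hk : k ≠ 0)
    {a b : ℝ → ℝ} (hband : ∀ r θ, g r θ = a r * cos (k * θ) + b r * sin (k * θ))
    (hg : ContDiff ℝ 1 (fun p : ℝ × ℝ => g p.1 p.2)) :
    ∫⁻ p in domRT, ENNReal.ofReal ((g p.1 p.2 / p.1) ^ 2 * p.1) ≤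
      ∫⁻ p in domRT, ENNReal.ofReal ((pdt g p.1 p.2 / p.1) ^ 2 * p.1) := by
  have hgc : Continuous fun p : ℝ × ℝ => g p.1 p.2 := hg.continuous
  have hpc := continuous_pdt hg
  refine setLIntegral_domRT_mono (by fun_prop) (by fun_prop) fun r hr => ?_
  have hsq : ∀ x : ℝ, (x / r) ^ 2 * r = x ^ 2 / r := fun x => by field_simp
  have hslice : (fun θ => g r θ) = fun θ => a r * cos (k * θ) + b r * sin (k * θ) :=
    funext (hband r)
  have hreal : ∫ θ in Ioc 0 (2 * π), (g r θ / r) ^ 2 * r ≤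
      ∫ θ in Ioc 0 (2 * π), (pdt g r θ / r) ^ 2 * r := by
    simp_rw [hsq, integral_div, pdt, hslice]
    exact div_le_div_of_nonneg_right (setIntegral_sq_le_setIntegral_deriv_sq hk (a r) (b r)) hr.le
  have hnonneg : ∀ x : ℝ, 0 ≤ (x / r) ^ 2 * r := fun x => mul_nonneg (sq_nonneg _) hr.le
  rw [← ofReal_integral_eq_lintegral_ofReal (Continuous.integrableOn_Ioc (by fun_prop))
      (ae_of_all _ fun θ => hnonneg _),
    ← ofReal_integral_eq_lintegral_ofReal (Continuous.integrableOn_Ioc (by fun_prop))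
      (ae_of_all _ fun θ => hnonneg _)]
  exact ENNReal.ofReal_le_ofReal hreal

section LIntegralComparison

variable {α : Type*} [MeasurableSpace α] {μ : Measure α} {F G : α → ℝ}

lemma integrable_of_lintegral_ofReal_le (hF : AEStronglyMeasurable F μ) (hF0 : 0 ≤ᵐ[μ] F)
    (hG : Integrable G μ) (h : ∫⁻ x, ENNReal.ofReal (F x) ∂μ ≤ ∫⁻ x, ENNReal.ofReal (G x) ∂μ) :
    Integrable F μ :=
  ⟨hF, (hasFiniteIntegral_iff_ofReal hF0).mpr (h.trans_lt hG.lintegral_lt_top)⟩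

lemma integral_le_of_lintegral_ofReal_le (hF : AEStronglyMeasurable F μ) (hF0 : 0 ≤ᵐ[μ] F)
    (hG : Integrable G μ) (hG0 : 0 ≤ᵐ[μ] G)
    (h : ∫⁻ x, ENNReal.ofReal (F x) ∂μ ≤ ∫⁻ x, ENNReal.ofReal (G x) ∂μ) :
    ∫ x, F x ∂μ ≤ ∫ x, G x ∂μ := by
  rw [integral_eq_lintegral_of_nonneg_ae hF0 hF,
    integral_eq_lintegral_of_nonneg_ae hG0 hG.aestronglyMeasurable]
  exact ENNReal.toReal_mono hG.lintegral_lt_top.ne h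

end LIntegralComparison

lemma rpow_young {q σ r : ℝ} (hq : 1 ≤ q) (hσ : 0 ≤ σ) (hr : 0 < r) :
    σ ^ (1 / q) * (r ^ (q - 2)) ^ 2 ≤ σ * r⁻¹ ^ 2 + (r ^ (q - 1)) ^ 2 := by
  have hq0 : 0 < q := by linarith
  have hw : 1 / q ≤ 1 := (div_le_one hq0).mpr hq
  have hsq : ∀ x : ℝ, (r ^ x) ^ 2 = r ^ (2 * x) := fun x => by
    rw [← rpow_natCast, ← rpow_mul hr.le, mul_comm]
    norm_num
  rw [← rpow_neg_one, hsq, hsq, hsq]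
  have hp₁ : 0 ≤ σ * r ^ (2 * (-1 : ℝ)) := by positivity
  have hp₂ : 0 ≤ r ^ (2 * (q - 1)) := by positivity
  -- weighted AM-GM with weights `1/q`, `1 - 1/q`; the powers of `r` combine to `r ^ (2 * (q - 2))`
  have hamgm := geom_mean_le_arith_mean2_weighted (by positivity) (by linarith) hp₁ hp₂
    (add_sub_cancel (1 / q) 1)
  have hprod : (σ * r ^ (2 * (-1 : ℝ))) ^ (1 / q) * (r ^ (2 * (q - 1))) ^ (1 - 1 / q) =
      σ ^ (1 / q) * r ^ (2 * (q - 2)) := by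
    rw [mul_rpow hσ (by positivity), ← rpow_mul hr.le, ← rpow_mul hr.le, mul_assoc,
      ← rpow_add hr]
    congr 2
    field_simp
    ring
  have hw' : 1 - 1 / q ≤ 1 := by linarith [one_div_nonneg.mpr hq0.le]
  linarith [hprod ▸ hamgm, mul_le_of_le_one_left hp₁ hw, mul_le_of_le_one_left hp₂ hw']

lemma nrm2_young {q σ : ℝ} (hq : 1 ≤ q) (hσ : 0 ≤ σ) {g : ℝ → ℝ → ℝ}
    (hg : IntegrableOn (fun p : ℝ × ℝ => (g p.1 p.2 / p.1) ^ 2 * p.1) domRT)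
    (hgq : IntegrableOn (fun p : ℝ × ℝ => (p.1 ^ (q - 1) * g p.1 p.2) ^ 2 * p.1) domRT) :
    σ ^ (1 / q) * nrm2 (fun r θ => r ^ (q - 2) * g r θ) ≤
      σ * nrm2 (fun r θ => g r θ / r) + nrm2 (fun r θ => r ^ (q - 1) * g r θ) := by
  have hpointwise : ∀ r G : ℝ, 0 < r → σ ^ (1 / q) * ((r ^ (q - 2) * G) ^ 2 * r) ≤
      σ * ((G / r) ^ 2 * r) + (r ^ (q - 1) * G) ^ 2 * r := fun r G hr =>
    calc σ ^ (1 / q) * ((r ^ (q - 2) * G) ^ 2 * r)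
        = σ ^ (1 / q) * (r ^ (q - 2)) ^ 2 * (G ^ 2 * r) := by ring
      _ ≤ (σ * r⁻¹ ^ 2 + (r ^ (q - 1)) ^ 2) * (G ^ 2 * r) := by
        gcongr
        exact rpow_young hq hσ hr
      _ = σ * ((G / r) ^ 2 * r) + (r ^ (q - 1) * G) ^ 2 * r := by ring
  unfold nrm2
  rw [← integral_const_mul, ← integral_const_mul, ← integral_add (hg.const_mul σ) hgq]
  refine integral_mono_of_nonneg ?_ ((hg.const_mul σ).add hgq) ?_
  · filter_upwards [ae_domRT_fst_pos] with p hp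
    positivity
  · filter_upwards [ae_domRT_fst_pos] with p hp
    exact hpointwise p.1 _ hp

/-- Weighted inequality controlling the behavior at the origin: for `q ≥ 1` there is a
constant `c_q ≥ 2`, depending only on `q`, such that for every `g ∈ H¹` with
`r^{q−1}g ∈ L²` localized to an angular frequency band `k ≥ 1` and every `σ > 0`,
`(1/c_q) σ^{1/q} ‖r^{q−2}g‖² ≤ σ‖∇g‖² + ‖r^{q−1}g‖²`. -/
theorem weighted_origin_inequality (q : ℝ) (hq : 1 ≤ q) :
    ∃ c : ℝ, 2 ≤ c ∧
      ∀ (k : ℕ), 1 ≤ k →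
      ∀ g : ℝ → ℝ → ℝ,
        ContDiff ℝ 1 (fun p : ℝ × ℝ => g p.1 p.2) →
        (∃ a b : ℝ → ℝ, ∀ r θ,
          g r θ = a r * Real.cos (k * θ) + b r * Real.sin (k * θ)) →
        IntegrableOn (fun p : ℝ × ℝ => (g p.1 p.2)^2 * p.1) domRT →
        IntegrableOn (fun p : ℝ × ℝ => (pdr g p.1 p.2)^2 * p.1) domRT →
        IntegrableOn (fun p : ℝ × ℝ => (pdt g p.1 p.2 / p.1)^2 * p.1) domRT →
        IntegrableOn (fun p : ℝ × ℝ => (p.1 ^ (q-1) * g p.1 p.2)^2 * p.1) domRT →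
        ∀ σ : ℝ, 0 < σ →
          (1/c) * σ ^ (1/q) * nrm2 (fun r θ => r ^ (q-2) * g r θ) ≤
            σ * gnrm2 g + nrm2 (fun r θ => r ^ (q-1) * g r θ) := by
  refine ⟨2, le_rfl, fun k hk g hg ⟨a, b, hband⟩ _ _ hpdt hgq σ hσ => ?_⟩
  have hnonneg : ∀ f : ℝ → ℝ → ℝ,
      0 ≤ᵐ[volume.restrict domRT] fun p => (f p.1 p.2 / p.1) ^ 2 * p.1 :=
    fun f => ae_domRT_fst_pos.mono fun p hp => mul_nonneg (sq_nonneg _) hp.le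
  have hcmp :=
    setLIntegral_sq_div_le_setLIntegral_pdt_sq_div (Nat.one_le_iff_ne_zero.mp hk) hband hg
  have hmeas : AEStronglyMeasurable (fun p : ℝ × ℝ => (g p.1 p.2 / p.1) ^ 2 * p.1)
      (volume.restrict domRT) :=
    ((hg.continuous.measurable.div measurable_fst).pow_const 2
      |>.mul measurable_fst).aestronglyMeasurable
  have hint : IntegrableOn (fun p : ℝ × ℝ => (g p.1 p.2 / p.1) ^ 2 * p.1) domRT :=
    integrable_of_lintegral_ofReal_le hmeas (hnonneg g) hpdt hcmp
  have hwirtinger : nrm2 (fun r θ => g r θ / r) ≤ nrm2 (fun r θ => pdt g r θ / r) :=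
    integral_le_of_lintegral_ofReal_le hmeas (hnonneg g) hpdt (hnonneg (pdt g)) hcmp
  have hpdt_le : nrm2 (fun r θ => pdt g r θ / r) ≤ gnrm2 g :=
    le_add_of_nonneg_left (nrm2_nonneg (pdr g))
  calc 1 / 2 * σ ^ (1 / q) * nrm2 (fun r θ => r ^ (q - 2) * g r θ)
      ≤ σ ^ (1 / q) * nrm2 (fun r θ => r ^ (q - 2) * g r θ) :=
        mul_le_mul_of_nonneg_right (by linarith [rpow_nonneg hσ.le (1 / q)]) (nrm2_nonneg _)
    _ ≤ σ * nrm2 (fun r θ => g r θ / r) + nrm2 (fun r θ => r ^ (q - 1) * g r θ) :=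
        nrm2_young hq hσ.le hint hgq
    _ ≤ σ * gnrm2 g + nrm2 (fun r θ => r ^ (q - 1) * g r θ) := by
        gcongr
        exact hwirtinger.trans hpdt_le
end
end

section
/- Let q ≥ 2, let k ≥ 1 be an integer, and let g ∈ H¹ with r^{q−1}g ∈ L² be localized to the angular frequency band k. Then for every σ > 0, σ^{1/q} ‖r^{q−2} g‖² ≤ σ ‖∇g‖² + 2 ‖r^{q−1} g‖². -/
open MeasureTheory Real Set

noncomputable section

/-! The angular derivative of a band-`k` function is `k` times its rotation by the quarter
period `π/(2k)`, so translation invariance of `r dr dθ` over a full period in `θ` gives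
`‖r⁻¹ ∂_θ g‖² = k² ‖g/r‖² ≥ ‖g/r‖²`. Pointwise, weighted AM–GM with weights `1/q` and `1 - 1/q`
gives `σ^{1/q} r^{2(q-2)} ≤ σ r⁻² + r^{2(q-1)}` for `q ≥ 1`; multiplying by `g² r` and integrating
bounds `σ^{1/q} ‖r^{q-2} g‖²` by `σ ‖g/r‖² + ‖r^{q-1} g‖²`. -/

lemma rpow_sq_le_div_add_rpow_sq {q σ r : ℝ} (hq : 1 ≤ q) (hσ : 0 ≤ σ) (hr : 0 < r) :
    σ ^ (1/q) * (r ^ (q-2))^2 ≤ σ / r^2 + (r ^ (q-1))^2 := by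
  have hq0 : 0 < q := by linarith
  have hw : 1/q ≤ 1 := by rw [div_le_one hq0]; exact hq
  have hpow : ((r ^ q)^2) ^ (1 - 1/q) = (r ^ (q-1))^2 := by
    rw [← Real.rpow_natCast, ← Real.rpow_natCast, ← Real.rpow_mul hr.le, ← Real.rpow_mul hr.le,
      ← Real.rpow_mul hr.le]
    congr 1; field_simp
  have amgm : σ ^ (1/q) * (r ^ (q-1))^2 ≤ σ + (r ^ q)^2 := by
    have h := Real.geom_mean_le_arith_mean2_weighted (w₁ := 1/q) (w₂ := 1 - 1/q) (p₁ := σ)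
      (p₂ := (r ^ q)^2) (by positivity) (by linarith) hσ (by positivity) (by ring)
    rw [hpow] at h
    have h₁ : 1/q * σ ≤ σ := mul_le_of_le_one_left hσ hw
    have h₂ : (1 - 1/q) * (r ^ q)^2 ≤ (r ^ q)^2 :=
      mul_le_of_le_one_left (sq_nonneg _) (by linarith [one_div_pos.2 hq0])
    linarith
  have hsucc : ∀ s : ℝ, r ^ (s + 1) = r ^ s * r := fun s => Real.rpow_add_one hr.ne' s
  have h₁ : r ^ (q - 1) = r ^ (q - 2) * r := by rw [← hsucc]; ring_nf
  have h₂ : r ^ q = r ^ (q - 2) * r * r := by rw [← hsucc, ← hsucc]; ring_nf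
  rw [h₁, h₂] at amgm
  rw [h₁, div_add' _ _ _ (by positivity), le_div_iff₀ (by positivity)]
  linarith

section VerticalShift

variable {E : Type*} [NormedAddCommGroup E] {f : ℝ × ℝ → E} {s : Set ℝ}

lemma preimage_add_vertical_prod_Ioc (s : Set ℝ) (a b c : ℝ) :
    (· + ((0 : ℝ), c)) ⁻¹' (s ×ˢ Ioc (a + c) (b + c)) = s ×ˢ Ioc a b := by
  ext p
  simp

lemma integrableOn_prod_Ioc_comp_add_vertical (a b c : ℝ) :
    IntegrableOn (fun p => f (p + (0, c))) (s ×ˢ Ioc a b) ↔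
      IntegrableOn f (s ×ˢ Ioc (a + c) (b + c)) := by
  rw [← preimage_add_vertical_prod_Ioc s a b c]
  exact (measurePreserving_add_right volume _).integrableOn_comp_preimage
    (MeasurableEquiv.addRight _).measurableEmbedding

lemma setIntegral_prod_Ioc_comp_add_vertical [NormedSpace ℝ E] (a b c : ℝ) :
    ∫ p in s ×ˢ Ioc a b, f (p + (0, c)) = ∫ p in s ×ˢ Ioc (a + c) (b + c), f p := by
  rw [← preimage_add_vertical_prod_Ioc s a b c]
  exact (measurePreserving_add_right volume _).setIntegral_preimage_emb
    (MeasurableEquiv.addRight _).measurableEmbedding f _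

lemma prod_Ioc_union_prod_Ioc {a b d : ℝ} (hab : a ≤ b) (hbd : b ≤ d) :
    s ×ˢ Ioc a b ∪ s ×ˢ Ioc b d = s ×ˢ Ioc a d := by
  rw [← prod_union, Ioc_union_Ioc_eq_Ioc hab hbd]

lemma disjoint_prod_Ioc_prod_Ioc (a b d : ℝ) : Disjoint (s ×ˢ Ioc a b) (s ×ˢ Ioc b d) :=
  disjoint_prod.2 (Or.inr (Ioc_disjoint_Ioc_of_le le_rfl))

variable {T c : ℝ}

lemma integrableOn_prod_Ioc_comp_add_vertical_of_periodic (hf : ∀ p, f (p + (0, T)) = f p)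
    (hc₀ : 0 ≤ c) (hcT : c ≤ T) :
    IntegrableOn (fun p => f (p + (0, c))) (s ×ˢ Ioc 0 T) ↔ IntegrableOn f (s ×ˢ Ioc 0 T) := by
  have hwrap : IntegrableOn f (s ×ˢ Ioc T (T + c)) ↔ IntegrableOn f (s ×ˢ Ioc 0 c) := by
    simpa only [zero_add, hf, add_comm c T] using
      (integrableOn_prod_Ioc_comp_add_vertical (f := f) (s := s) 0 c T).symm
  rw [integrableOn_prod_Ioc_comp_add_vertical, zero_add, ← prod_Ioc_union_prod_Ioc hcT
    (by linarith), ← prod_Ioc_union_prod_Ioc hc₀ hcT, integrableOn_union, integrableOn_union,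
    hwrap, and_comm]

lemma setIntegral_prod_Ioc_comp_add_vertical_of_periodic [NormedSpace ℝ E]
    (hf : ∀ p, f (p + (0, T)) = f p) (hc₀ : 0 ≤ c) (hcT : c ≤ T) (hs : MeasurableSet s) :
    ∫ p in s ×ˢ Ioc 0 T, f (p + (0, c)) = ∫ p in s ×ˢ Ioc 0 T, f p := by
  by_cases hint : IntegrableOn f (s ×ˢ Ioc 0 T)
  · have hwrap : ∫ p in s ×ˢ Ioc T (T + c), f p = ∫ p in s ×ˢ Ioc 0 c, f p := by
      simpa only [zero_add, hf, add_comm c T] using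
        (setIntegral_prod_Ioc_comp_add_vertical (f := f) (s := s) 0 c T).symm
    have h₁ := hint.mono_set (prod_mono_right (Ioc_subset_Ioc_right hcT))
    have h₂ := hint.mono_set (prod_mono_right (Ioc_subset_Ioc_left hc₀))
    have h₃ := ((integrableOn_prod_Ioc_comp_add_vertical_of_periodic hf hc₀ hcT).2 hint)
    rw [integrableOn_prod_Ioc_comp_add_vertical, zero_add, ← prod_Ioc_union_prod_Ioc hcT
      (by linarith), integrableOn_union] at h₃
    rw [setIntegral_prod_Ioc_comp_add_vertical, zero_add, ← prod_Ioc_union_prod_Ioc hcT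
      (by linarith), setIntegral_union (disjoint_prod_Ioc_prod_Ioc _ _ _)
      (hs.prod measurableSet_Ioc) h₃.1 h₃.2, hwrap, ← prod_Ioc_union_prod_Ioc hc₀ hcT,
      setIntegral_union (disjoint_prod_Ioc_prod_Ioc _ _ _) (hs.prod measurableSet_Ioc) h₁ h₂,
      add_comm]
  · rw [integral_undef hint, integral_undef
      (mt (integrableOn_prod_Ioc_comp_add_vertical_of_periodic hf hc₀ hcT).1 hint)]

end VerticalShift

def sqDensity (g : ℝ → ℝ → ℝ) (p : ℝ × ℝ) : ℝ := (g p.1 p.2)^2 * p.1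

lemma nrm2_eq_integral_sqDensity (g : ℝ → ℝ → ℝ) : nrm2 g = ∫ p in domRT, sqDensity g p := rfl

lemma sqDensity_nonneg (g : ℝ → ℝ → ℝ) {p : ℝ × ℝ} (hp : p ∈ domRT) : 0 ≤ sqDensity g p := by
  have : 0 < p.1 := hp.1
  unfold sqDensity
  positivity

def IsAngularBand (k : ℕ) (g : ℝ → ℝ → ℝ) : Prop :=
  ∃ a b : ℝ → ℝ, ∀ r θ, g r θ = a r * Real.cos (k * θ) + b r * Real.sin (k * θ)

lemma pi_div_two_mul_le_two_pi {k : ℕ} (hk : k ≠ 0) : π / (2 * k) ≤ 2 * π := by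
  have : (1 : ℝ) ≤ k := by exact_mod_cast Nat.one_le_iff_ne_zero.2 hk
  rw [div_le_iff₀ (by positivity)]
  nlinarith [pi_pos]

namespace IsAngularBand

variable {k : ℕ} {g : ℝ → ℝ → ℝ}

lemma add_two_pi (hg : IsAngularBand k g) (r θ : ℝ) : g r (θ + 2 * π) = g r θ := by
  obtain ⟨a, b, hab⟩ := hg
  rw [hab, hab, mul_add,
    Real.cos_add_nat_mul_two_pi, Real.sin_add_nat_mul_two_pi]

lemma pdt_eq (hg : IsAngularBand k g) (hk : k ≠ 0) (r θ : ℝ) :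
    pdt g r θ = k * g r (θ + π / (2 * k)) := by
  obtain ⟨a, b, hab⟩ := hg
  have hkθ : HasDerivAt (fun x : ℝ => (k : ℝ) * x) k θ := by
    simpa using (hasDerivAt_id θ).const_mul (k : ℝ)
  have hderiv : HasDerivAt (g r)
      (a r * (-Real.sin (k * θ) * k) + b r * (Real.cos (k * θ) * k)) θ := by
    rw [show g r = _ from funext (hab r)]
    exact (hkθ.cos.const_mul (a r)).add (hkθ.sin.const_mul (b r))
  have hquarter : (k : ℝ) * (θ + π / (2 * k)) = k * θ + π / 2 := by
    field_simp
  rw [pdt, hderiv.deriv, hab, hquarter, Real.cos_add_pi_div_two, Real.sin_add_pi_div_two]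
  ring

lemma sqDensity_pdt_div (hg : IsAngularBand k g) (hk : k ≠ 0) :
    sqDensity (fun r θ => pdt g r θ / r) =
      fun p => (k : ℝ)^2 * sqDensity (fun r θ => g r θ / r) (p + (0, π / (2 * k))) := by
  ext p
  simp only [sqDensity, hg.pdt_eq hk, Prod.fst_add, Prod.snd_add, add_zero]
  ring

lemma sqDensity_div_add_two_pi (hg : IsAngularBand k g) (p : ℝ × ℝ) :
    sqDensity (fun r θ => g r θ / r) (p + (0, 2 * π)) = sqDensity (fun r θ => g r θ / r) p := by
  simp only [sqDensity, Prod.fst_add, Prod.snd_add, add_zero, hg.add_two_pi]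

lemma integrableOn_sqDensity_pdt_div_iff (hg : IsAngularBand k g) (hk : k ≠ 0) :
    IntegrableOn (sqDensity (fun r θ => pdt g r θ / r)) domRT ↔
      IntegrableOn (sqDensity (fun r θ => g r θ / r)) domRT := by
  rw [hg.sqDensity_pdt_div hk, IntegrableOn, integrable_const_mul_iff
    (isUnit_iff_ne_zero.2 (by positivity)), ← IntegrableOn]
  exact integrableOn_prod_Ioc_comp_add_vertical_of_periodic hg.sqDensity_div_add_two_pi
    (by positivity) (pi_div_two_mul_le_two_pi hk)

lemma nrm2_pdt_div (hg : IsAngularBand k g) (hk : k ≠ 0) :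
    nrm2 (fun r θ => pdt g r θ / r) = k^2 * nrm2 (fun r θ => g r θ / r) := by
  rw [nrm2_eq_integral_sqDensity, nrm2_eq_integral_sqDensity, hg.sqDensity_pdt_div hk,
    integral_const_mul]
  exact congrArg _ (setIntegral_prod_Ioc_comp_add_vertical_of_periodic
    hg.sqDensity_div_add_two_pi (by positivity) (pi_div_two_mul_le_two_pi hk) measurableSet_Ioi)

lemma nrm2_div_le_gnrm2 (hg : IsAngularBand k g) (hk : k ≠ 0) :
    nrm2 (fun r θ => g r θ / r) ≤ gnrm2 g :=
  calc nrm2 (fun r θ => g r θ / r)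
      ≤ k^2 * nrm2 (fun r θ => g r θ / r) :=
        le_mul_of_one_le_left (nrm2_nonneg _)
          (one_le_pow₀ (by exact_mod_cast Nat.one_le_iff_ne_zero.2 hk))
    _ = nrm2 (fun r θ => pdt g r θ / r) := (hg.nrm2_pdt_div hk).symm
    _ ≤ gnrm2 g := le_add_of_nonneg_left (nrm2_nonneg _)

end IsAngularBand

lemma sqDensity_rpow_le {q σ : ℝ} (hq : 1 ≤ q) (hσ : 0 ≤ σ) (g : ℝ → ℝ → ℝ) {p : ℝ × ℝ}
    (hp : p ∈ domRT) :
    σ ^ (1/q) * sqDensity (fun r θ => r ^ (q-2) * g r θ) p ≤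
      σ * sqDensity (fun r θ => g r θ / r) p + sqDensity (fun r θ => r ^ (q-1) * g r θ) p := by
  have hr : 0 < p.1 := hp.1
  have h := mul_le_mul_of_nonneg_right (rpow_sq_le_div_add_rpow_sq hq hσ hr)
    (by positivity : 0 ≤ (g p.1 p.2)^2 * p.1)
  simp only [sqDensity]
  calc _ = _ := by ring
    _ ≤ _ := h
    _ = _ := by ring

lemma rpow_mul_nrm2_le {q σ : ℝ} (hq : 1 ≤ q) (hσ : 0 ≤ σ) {g : ℝ → ℝ → ℝ}
    (hdiv : IntegrableOn (sqDensity (fun r θ => g r θ / r)) domRT)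
    (hw : IntegrableOn (sqDensity (fun r θ => r ^ (q-1) * g r θ)) domRT) :
    σ ^ (1/q) * nrm2 (fun r θ => r ^ (q-2) * g r θ) ≤
      σ * nrm2 (fun r θ => g r θ / r) + nrm2 (fun r θ => r ^ (q-1) * g r θ) := by
  simp only [nrm2_eq_integral_sqDensity]
  rw [← integral_const_mul, ← integral_const_mul, ← integral_add (hdiv.const_mul σ) hw]
  refine integral_mono_of_nonneg ?_ ((hdiv.const_mul σ).add hw) ?_ <;>
    filter_upwards [self_mem_ae_restrict measurableSet_domRT] with p hp
  · exact mul_nonneg (by positivity) (sqDensity_nonneg _ hp)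
  · exact sqDensity_rpow_le hq hσ g hp

theorem weighted_origin_inequality_q_ge_two_general
    (q : ℝ) (hq : 2 ≤ q) (k : ℕ) (hk : 1 ≤ k)
    (g : ℝ → ℝ → ℝ)
    (hband : ∃ a b : ℝ → ℝ, ∀ r θ,
      g r θ = a r * Real.cos (k * θ) + b r * Real.sin (k * θ))
    (hH1t : IntegrableOn (fun p : ℝ × ℝ => (pdt g p.1 p.2 / p.1)^2 * p.1) domRT)
    (hwL2 : IntegrableOn (fun p : ℝ × ℝ => (p.1 ^ (q-1) * g p.1 p.2)^2 * p.1) domRT)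
    (σ : ℝ) (hσ : 0 < σ) :
    σ ^ (1/q) * nrm2 (fun r θ => r ^ (q-2) * g r θ) ≤
      σ * gnrm2 g + 2 * nrm2 (fun r θ => r ^ (q-1) * g r θ) := by
  have hband : IsAngularBand k g := hband
  have hk₀ : k ≠ 0 := Nat.one_le_iff_ne_zero.1 hk
  calc σ ^ (1/q) * nrm2 (fun r θ => r ^ (q-2) * g r θ)
      ≤ σ * nrm2 (fun r θ => g r θ / r) + nrm2 (fun r θ => r ^ (q-1) * g r θ) :=
        rpow_mul_nrm2_le (by linarith) hσ.le
          ((hband.integrableOn_sqDensity_pdt_div_iff hk₀).1 hH1t) hwL2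
    _ ≤ σ * gnrm2 g + 2 * nrm2 (fun r θ => r ^ (q-1) * g r θ) :=
        add_le_add (mul_le_mul_of_nonneg_left (hband.nrm2_div_le_gnrm2 hk₀) hσ.le)
          (le_mul_of_one_le_left (nrm2_nonneg _) one_le_two)

/-- Weighted inequality in the case `q ≥ 2`: for `g ∈ H¹` with `r^{q−1}g ∈ L²`
localized to an angular frequency band `k ≥ 1` and every `σ > 0`,
`σ^{1/q} ‖r^{q−2}g‖² ≤ σ‖∇g‖² + 2‖r^{q−1}g‖²`. -/
theorem weighted_origin_inequality_q_ge_two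
    (q : ℝ) (hq : 2 ≤ q) (k : ℕ) (hk : 1 ≤ k)
    (g : ℝ → ℝ → ℝ)
    (hsm : ContDiff ℝ 1 (fun p : ℝ × ℝ => g p.1 p.2))
    (hband : ∃ a b : ℝ → ℝ, ∀ r θ,
      g r θ = a r * Real.cos (k * θ) + b r * Real.sin (k * θ))
    (hL2 : IntegrableOn (fun p : ℝ × ℝ => (g p.1 p.2)^2 * p.1) domRT)
    (hH1r : IntegrableOn (fun p : ℝ × ℝ => (pdr g p.1 p.2)^2 * p.1) domRT)
    (hH1t : IntegrableOn (fun p : ℝ × ℝ => (pdt g p.1 p.2 / p.1)^2 * p.1) domRT)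
    (hwL2 : IntegrableOn (fun p : ℝ × ℝ => (p.1 ^ (q-1) * g p.1 p.2)^2 * p.1) domRT)
    (σ : ℝ) (hσ : 0 < σ) :
    σ ^ (1/q) * nrm2 (fun r θ => r ^ (q-2) * g r θ) ≤
      σ * gnrm2 g + 2 * nrm2 (fun r θ => r ^ (q-1) * g r θ) :=
  weighted_origin_inequality_q_ge_two_general q hq k hk g hband hH1t hwL2 σ hσ
end
end

section
/- Let q ∈ (1,2) and let g be a smooth function on (0,∞)×𝕋, vanishing sufficiently fast at r = 0 and r = ∞ so that all the norms below are finite and the boundary terms in integration by parts vanish (for instance, g localized to an angular frequency band k ≥ 1 with coefficients behaving like r^k near the origin). Then (q−1) ‖r^{q−2} g‖² ≤ ‖∂_r g‖ · ‖g/r‖^{(2−q)/q} · ‖r^{q−1} g‖^{2(q−1)/q}. -/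
open MeasureTheory Real Set

noncomputable section

section Helpers

variable {X : Type*} [MeasurableSpace X] {μ : Measure X}

/-- Cauchy–Schwarz inequality for integrals. -/
lemma my_cauchy_schwarz {U V : X → ℝ} (hU : AEStronglyMeasurable U μ)
    (hV : AEStronglyMeasurable V μ)
    (hU2 : Integrable (fun x => U x ^ 2) μ) (hV2 : Integrable (fun x => V x ^ 2) μ) :
    |∫ x, U x * V x ∂μ| ≤ Real.sqrt (∫ x, U x ^ 2 ∂μ) * Real.sqrt (∫ x, V x ^ 2 ∂μ) := by
  have h2 : (2:ℝ).HolderConjugate 2 := Real.holderConjugate_iff.mpr ⟨one_lt_two, by norm_num⟩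
  have hU' : MemLp U (ENNReal.ofReal 2) μ := by
    rw [show ENNReal.ofReal 2 = 2 by simp]
    exact (memLp_two_iff_integrable_sq hU).mpr hU2
  have hV' : MemLp V (ENNReal.ofReal 2) μ := by
    rw [show ENNReal.ofReal 2 = 2 by simp]
    exact (memLp_two_iff_integrable_sq hV).mpr hV2
  have key := integral_mul_norm_le_Lp_mul_Lq h2 hU' hV'
  have e1 : ∀ (W : X → ℝ), (∫ x, ‖W x‖ ^ (2:ℝ) ∂μ) = ∫ x, W x ^ 2 ∂μ := by
    intro W
    refine integral_congr_ae (Filter.Eventually.of_forall fun x => ?_)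
    have : ‖W x‖ ^ (2:ℝ) = W x ^ 2 := by
      rw [show (2:ℝ) = ((2:ℕ):ℝ) by norm_num, Real.rpow_natCast]
      simp [sq_abs]
    simpa using this
  calc |∫ x, U x * V x ∂μ| ≤ ∫ x, ‖U x * V x‖ ∂μ := by
        simpa [Real.norm_eq_abs] using
          norm_integral_le_integral_norm (μ := μ) (fun x => U x * V x)
    _ = ∫ x, ‖U x‖ * ‖V x‖ ∂μ := by
        simp [Real.norm_eq_abs, abs_mul]
    _ ≤ (∫ x, ‖U x‖ ^ (2:ℝ) ∂μ) ^ (1/(2:ℝ)) * (∫ x, ‖V x‖ ^ (2:ℝ) ∂μ) ^ (1/(2:ℝ)) := key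
    _ = _ := by rw [e1 U, e1 V, ← Real.sqrt_eq_rpow, ← Real.sqrt_eq_rpow]

/-- Interpolation (Hölder) inequality for integrals of nonnegative functions. -/
lemma my_holder_interp {F G : X → ℝ} {s : ℝ} (hs0 : 0 < s) (hs1 : s < 1)
    (hF0 : 0 ≤ᵐ[μ] F) (hG0 : 0 ≤ᵐ[μ] G) (hF : Integrable F μ) (hG : Integrable G μ) :
    ∫ x, F x ^ s * G x ^ (1-s) ∂μ ≤ (∫ x, F x ∂μ) ^ s * (∫ x, G x ∂μ) ^ (1-s) := by
  have hs1' : 0 < 1 - s := by linarith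
  have hpq : (1/s).HolderConjugate (1/(1-s)) := by
    rw [Real.holderConjugate_iff]
    constructor
    · rw [lt_div_iff₀ hs0]; linarith
    · simp only [one_div, inv_inv]; ring
  have mem : ∀ (F : X → ℝ) (t : ℝ), 0 < t → 0 ≤ᵐ[μ] F → Integrable F μ →
      MemLp (fun x => F x ^ t) (ENNReal.ofReal (1/t)) μ := by
    intro F t ht hF0 hF
    have h1 : ENNReal.ofReal (1/t) = 1 / ENNReal.ofReal t := by
      rw [one_div, one_div, ENNReal.ofReal_inv_of_pos ht]
    rw [h1]
    have h2 := (memLp_norm_rpow_iff (q := ENNReal.ofReal t) (p := 1)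
      hF.aestronglyMeasurable (by simp [ht]) (by simp)).mpr
      (memLp_one_iff_integrable.mpr hF)
    rw [ENNReal.toReal_ofReal ht.le] at h2
    refine (memLp_congr_ae ?_).mp h2
    filter_upwards [hF0] with x hx
    rw [Real.norm_eq_abs, abs_of_nonneg hx]
  have key := integral_mul_le_Lp_mul_Lq_of_nonneg hpq
    (f := fun x => F x ^ s) (g := fun x => G x ^ (1-s))
    (by filter_upwards [hF0] with x hx using Real.rpow_nonneg hx s)
    (by filter_upwards [hG0] with x hx using Real.rpow_nonneg hx (1-s))
    (mem F s hs0 hF0 hF) (mem G (1-s) hs1' hG0 hG)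
  have eF : ∫ x, (F x ^ s) ^ (1/s) ∂μ = ∫ x, F x ∂μ := by
    refine integral_congr_ae ?_
    filter_upwards [hF0] with x hx
    rw [← Real.rpow_mul hx, mul_one_div, div_self hs0.ne', Real.rpow_one]
  have eG : ∫ x, (G x ^ (1-s)) ^ (1/(1-s)) ∂μ = ∫ x, G x ∂μ := by
    refine integral_congr_ae ?_
    filter_upwards [hG0] with x hx
    rw [← Real.rpow_mul hx, mul_one_div, div_self hs1'.ne', Real.rpow_one]
  have key' : ∫ x, F x ^ s * G x ^ (1-s) ∂μ ≤
      (∫ x, (F x ^ s) ^ (1/s) ∂μ) ^ (1/(1/s)) *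
      (∫ x, (G x ^ (1-s)) ^ (1/(1-s)) ∂μ) ^ (1/(1/(1-s))) := key
  rw [eF, eG, one_div_one_div, one_div_one_div] at key'
  exact key'

/-- Fubini for set integrals on `ℝ × ℝ`, integrating the second variable outside. -/
lemma my_setIntegral_prod_symm (f : ℝ × ℝ → ℝ) {s t : Set ℝ}
    (hf : IntegrableOn f (s ×ˢ t)) :
    ∫ z in s ×ˢ t, f z = ∫ y in t, ∫ x in s, f (x, y) := by
  have hf' : Integrable f ((volume.restrict s).prod (volume.restrict t)) := by
    rw [Measure.prod_restrict, ← Measure.volume_eq_prod]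
    exact hf
  rw [Measure.volume_eq_prod, ← Measure.prod_restrict]
  exact integral_prod_symm f hf'

end Helpers

set_option maxHeartbeats 1000000 in
/-- Interpolation inequality for `q ∈ (1,2)`: for a smooth function `g` on `(0,∞)×𝕋`,
vanishing near `r = 0` and for large `r`,
`(q−1)‖r^{q−2}g‖² ≤ ‖∂_r g‖ · ‖g/r‖^{(2−q)/q} · ‖r^{q−1}g‖^{2(q−1)/q}`. -/
theorem interpolation_inequality_q_between_one_two
    (q : ℝ) (hq1 : 1 < q) (hq2 : q < 2)
    (g : ℝ → ℝ → ℝ)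
    (hsm : ContDiff ℝ (⊤ : ℕ∞) (fun p : ℝ × ℝ => g p.1 p.2))
    (hper : ∀ r θ, g r (θ + 2*π) = g r θ)
    (hsupp : ∃ δ R : ℝ, 0 < δ ∧ ∀ r θ, (r ≤ δ ∨ R ≤ r) → g r θ = 0) :
    (q - 1) * nrm2 (fun r θ => r ^ (q-2) * g r θ) ≤
      Real.sqrt (nrm2 (pdr g))
        * Real.sqrt (nrm2 (fun r θ => g r θ / r)) ^ ((2-q)/q)
        * Real.sqrt (nrm2 (fun r θ => r ^ (q-1) * g r θ)) ^ (2*(q-1)/q) := by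
  obtain ⟨δ, R, hδ, hg0⟩ := hsupp
  set a : ℝ := δ/2 with ha_def
  set b : ℝ := max R δ + 1 with hb_def
  have ha : 0 < a := half_pos hδ
  have haδ : a < δ := half_lt_self hδ
  have hRb : max R δ < b := lt_add_one _
  have hab : a < b := (haδ.trans_le (le_max_right R δ)).trans hRb
  have hz : ∀ r θ, r ≤ a ∨ b ≤ r → g r θ = 0 := by
    rintro r θ (h|h)
    · exact hg0 r θ (Or.inl (h.trans haδ.le))
    · exact hg0 r θ (Or.inr ((le_max_left R δ).trans (hRb.le.trans h)))
  have hq0 : (0:ℝ) < q := lt_trans one_pos hq1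
  -- the function as a map on the plane
  have hGdiff : Differentiable ℝ (fun p : ℝ × ℝ => g p.1 p.2) := hsm.differentiable (by simp)
  have hGc : Continuous (fun p : ℝ × ℝ => g p.1 p.2) := hsm.continuous
  -- derivative facts
  have hF1 : ∀ (θ r : ℝ), HasDerivAt (fun x => g x θ) (pdr g r θ) r := by
    intro θ r
    have h : DifferentiableAt ℝ (fun x : ℝ => g x θ) r :=
      ((hGdiff (r, θ)).comp r (DifferentiableAt.prodMk differentiableAt_id (differentiableAt_const θ)) :
        DifferentiableAt ℝ ((fun p : ℝ × ℝ => g p.1 p.2) ∘ (fun x : ℝ => (x, θ))) r)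
    exact h.hasDerivAt
  have hgrC : Continuous (fun p : ℝ × ℝ => pdr g p.1 p.2) := by
    have hfd : ∀ p : ℝ × ℝ, HasDerivAt (fun x => g x p.2)
        (fderiv ℝ (fun p : ℝ × ℝ => g p.1 p.2) p (1, 0)) p.1 := by
      intro p
      have h1 : HasFDerivAt (fun p : ℝ × ℝ => g p.1 p.2)
          (fderiv ℝ (fun p : ℝ × ℝ => g p.1 p.2) p) p := (hGdiff p).hasFDerivAt
      have h2 : HasDerivAt (fun x : ℝ => (x, p.2)) ((1:ℝ), (0:ℝ)) p.1 :=
        (hasDerivAt_id p.1).prodMk (hasDerivAt_const p.1 p.2)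
      exact h1.comp_hasDerivAt p.1 h2
    have heq : (fun p : ℝ × ℝ => pdr g p.1 p.2) =
        fun p => fderiv ℝ (fun p : ℝ × ℝ => g p.1 p.2) p (1, 0) :=
      funext fun p => (hfd p).deriv
    rw [heq]
    exact (hsm.continuous_fderiv (by simp)).clm_apply continuous_const
  have hzr : ∀ r θ, r ≤ a ∨ b ≤ r → pdr g r θ = 0 := by
    rintro r θ (h|h)
    · have hev : (fun x => g x θ) =ᶠ[nhds r] (fun _ => 0) := by
        filter_upwards [Iio_mem_nhds (lt_of_le_of_lt h haδ)] with x hx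
        exact hg0 x θ (Or.inl hx.le)
      show deriv (fun x => g x θ) r = 0
      rw [hev.deriv_eq]; exact deriv_const r 0
    · have hev : (fun x => g x θ) =ᶠ[nhds r] (fun _ => 0) := by
        filter_upwards [Ioi_mem_nhds (lt_of_lt_of_le hRb h)] with x hx
        exact hg0 x θ (Or.inr ((le_max_left R δ).trans hx.le))
      show deriv (fun x => g x θ) r = 0
      rw [hev.deriv_eq]; exact deriv_const r 0
  have mdom : MeasurableSet domRT := measurableSet_Ioi.prod measurableSet_Ioc
  set T : Set (ℝ × ℝ) := Icc a b ×ˢ Ioc 0 (2*π) with hT_def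
  have hTsub : T ⊆ domRT :=
    Set.prod_mono (fun x hx => ha.trans_le hx.1) subset_rfl
  -- generic integrability on the domain
  have key_int : ∀ u : ℝ × ℝ → ℝ, ContinuousOn u (Ioi 0 ×ˢ (univ : Set ℝ)) →
      (∀ p : ℝ × ℝ, p.1 ∉ Icc a b → u p = 0) → IntegrableOn u domRT := by
    intro u hc h0
    have hsub : Icc a b ×ˢ Icc 0 (2*π) ⊆ Ioi (0:ℝ) ×ˢ (univ : Set ℝ) :=
      Set.prod_mono (fun x hx => ha.trans_le hx.1) (subset_univ _)
    have h1 : IntegrableOn u (Icc a b ×ˢ Icc 0 (2*π)) :=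
      (hc.mono hsub).integrableOn_compact (isCompact_Icc.prod isCompact_Icc)
    have h2 : IntegrableOn u T :=
      h1.mono_set (Set.prod_mono subset_rfl Ioc_subset_Icc_self)
    exact h2.of_forall_diff_eq_zero mdom
      (fun p hp => h0 p (fun hmem => hp.2 ⟨hmem, hp.1.2⟩))
  have key_eq : ∀ u : ℝ × ℝ → ℝ, (∀ p : ℝ × ℝ, p.1 ∉ Icc a b → u p = 0) →
      ∫ p in domRT, u p = ∫ p in T, u p := fun u h0 =>
    setIntegral_eq_of_subset_of_forall_diff_eq_zero mdom hTsub
      (fun p hp => h0 p (fun hmem => hp.2 ⟨hmem, hp.1.2⟩))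
  have hrpowC : ∀ c : ℝ, ContinuousOn (fun p : ℝ × ℝ => p.1 ^ c)
      (Ioi 0 ×ˢ (univ : Set ℝ)) := by
    intro c p hp
    exact ((Real.continuousAt_rpow_const p.1 c
      (Or.inl (ne_of_gt hp.1))).comp continuousAt_fst).continuousWithinAt
  -- algebraic normalization helpers
  have sqw : ∀ (r G e : ℝ), 0 < r → (r ^ e * G)^2 * r = G^2 * r ^ (2*e+1) := by
    intro r G e hr
    have h1 : (r ^ e)^2 = r ^ (e*2) := by
      rw [← Real.rpow_natCast (r ^ e) 2, ← Real.rpow_mul hr.le]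
      norm_num
    have h2 : r ^ (e*2) * r ^ (1:ℝ) = r ^ (2*e+1) := by
      rw [← Real.rpow_add hr]; ring_nf
    calc (r ^ e * G)^2 * r = G^2 * (r ^ (e*2) * r ^ (1:ℝ)) := by
          rw [mul_pow, h1, Real.rpow_one]; ring
      _ = G^2 * r ^ (2*e+1) := by rw [h2]
  have hdivw : ∀ (r G : ℝ), 0 < r → (G / r)^2 * r = G^2 * r ^ (-1:ℝ) := by
    intro r G hr
    rw [Real.rpow_neg_one, div_pow]
    field_simp
  have mulw : ∀ (c r x y s : ℝ), 0 ≤ c → 0 < r →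
      (c * r ^ x)^s * (c * r ^ y)^(1-s) = c * r ^ (x*s + y*(1-s)) := by
    intro c r x y s hc hr
    rw [Real.mul_rpow hc (Real.rpow_nonneg hr.le _),
        Real.mul_rpow hc (Real.rpow_nonneg hr.le _),
        ← Real.rpow_mul hr.le x s, ← Real.rpow_mul hr.le y (1-s),
        mul_mul_mul_comm, ← Real.rpow_add hr,
        ← Real.rpow_add' hc (by norm_num : s + (1-s) ≠ 0),
        show s + (1-s) = 1 by ring, Real.rpow_one]
  -- Integration by parts identity
  have hΦ0 : ∀ p : ℝ × ℝ, p.1 ∉ Icc a b →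
      (q-1) * ((p.1 ^ (q-2) * g p.1 p.2)^2 * p.1)
        + pdr g p.1 p.2 * (p.1 ^ (2*q-3) * g p.1 p.2) * p.1 = 0 := by
    intro p hp
    have h1 : p.1 ≤ a ∨ b ≤ p.1 := by
      simp only [Set.mem_Icc, not_and_or, not_le] at hp
      exact hp.imp le_of_lt le_of_lt |>.symm.imp id id |>.symm
    rw [hz p.1 p.2 h1, hzr p.1 p.2 h1]
    ring
  have hΦc : ContinuousOn (fun p : ℝ × ℝ =>
      (q-1) * ((p.1 ^ (q-2) * g p.1 p.2)^2 * p.1)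
        + pdr g p.1 p.2 * (p.1 ^ (2*q-3) * g p.1 p.2) * p.1)
      (Ioi 0 ×ˢ (univ : Set ℝ)) := by
    exact (continuousOn_const.mul
        ((((hrpowC (q-2)).mul hGc.continuousOn).pow 2).mul continuous_fst.continuousOn)).add
      ((hgrC.continuousOn.mul
        ((hrpowC (2*q-3)).mul hGc.continuousOn)).mul continuous_fst.continuousOn)
  have hΦint : IntegrableOn (fun p : ℝ × ℝ =>
      (q-1) * ((p.1 ^ (q-2) * g p.1 p.2)^2 * p.1)
        + pdr g p.1 p.2 * (p.1 ^ (2*q-3) * g p.1 p.2) * p.1) domRT :=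
    key_int _ hΦc hΦ0
  have hIBP : ∫ p in domRT, ((q-1) * ((p.1 ^ (q-2) * g p.1 p.2)^2 * p.1)
      + pdr g p.1 p.2 * (p.1 ^ (2*q-3) * g p.1 p.2) * p.1) = 0 := by
    rw [key_eq _ hΦ0, hT_def, my_setIntegral_prod_symm _ (hΦint.mono_set hTsub)]
    have inner : ∀ y : ℝ, (∫ x in Icc a b,
        ((q-1) * ((x ^ (q-2) * g x y)^2 * x)
          + pdr g x y * (x ^ (2*q-3) * g x y) * x)) = 0 := by
      intro y
      rw [MeasureTheory.integral_Icc_eq_integral_Ioc, ← intervalIntegral.integral_of_le hab.le]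
      have hH : ∀ x ∈ Set.uIcc a b, HasDerivAt (fun r => r ^ (2*q-2) * (g r y)^2 / 2)
          ((q-1) * ((x ^ (q-2) * g x y)^2 * x)
            + pdr g x y * (x ^ (2*q-3) * g x y) * x) x := by
        intro x hx
        rw [Set.uIcc_of_le hab.le] at hx
        have hx0 : 0 < x := ha.trans_le hx.1
        have h1 : HasDerivAt (fun r : ℝ => r ^ (2*q-2)) ((2*q-2) * x ^ (2*q-2-1)) x :=
          Real.hasDerivAt_rpow_const (Or.inl hx0.ne')
        have h2 : HasDerivAt (fun r => (g r y)^2)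
            ((2:ℕ) * (g x y) ^ (2-1) * pdr g x y) x := (hF1 y x).pow 2
        have h3 := (h1.mul h2).div_const 2
        refine h3.congr_deriv (Eq.symm ?_)
        have e1 : (x ^ (q-2) * g x y)^2 * x = (g x y)^2 * x ^ (2*(q-2)+1) := sqw x _ _ hx0
        have e2 : x ^ (2*q-3) * x = x ^ (2*q-2) := by
          nth_rewrite 2 [show x = x ^ (1:ℝ) by rw [Real.rpow_one]]
          rw [← Real.rpow_add hx0]
          congr 1
          ring
        have e3 : (2*(q-2)+1 : ℝ) = 2*q-3 := by ring
        have e4 : (2*q-2-1 : ℝ) = 2*q-3 := by ring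
        rw [e1, e3, e4, ← e2]
        push_cast
        ring
      have hg_y : Continuous (fun x : ℝ => g x y) :=
        hGc.comp (continuous_id.prodMk continuous_const)
      have hgr_y : Continuous (fun x : ℝ => pdr g x y) :=
        hgrC.comp (continuous_id.prodMk continuous_const)
      have hrp : ∀ c : ℝ, ContinuousOn (fun x : ℝ => x ^ c) (Set.uIcc a b) := by
        intro c x hx
        rw [Set.uIcc_of_le hab.le] at hx
        exact (Real.continuousAt_rpow_const x c
          (Or.inl (ha.trans_le hx.1).ne')).continuousWithinAt
      have hcont : ContinuousOn (fun x => (q-1) * ((x ^ (q-2) * g x y)^2 * x)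
          + pdr g x y * (x ^ (2*q-3) * g x y) * x) (Set.uIcc a b) :=
        (continuousOn_const.mul ((((hrp (q-2)).mul hg_y.continuousOn).pow 2).mul
            continuous_id'.continuousOn)).add
          ((hgr_y.continuousOn.mul ((hrp (2*q-3)).mul hg_y.continuousOn)).mul
            continuous_id'.continuousOn)
      rw [intervalIntegral.integral_eq_sub_of_hasDerivAt hH hcont.intervalIntegrable]
      rw [hz b y (Or.inr le_rfl), hz a y (Or.inl le_rfl)]
      ring
    simp only [inner, integral_zero]
  -- split the integral
  have houtside : ∀ p : ℝ × ℝ, p.1 ∉ Icc a b → p.1 ≤ a ∨ b ≤ p.1 := by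
    intro p hp
    simp only [Set.mem_Icc, not_and_or, not_le] at hp
    exact hp.imp le_of_lt le_of_lt
  have hDint : IntegrableOn (fun p : ℝ × ℝ => (p.1 ^ (q-2) * g p.1 p.2)^2 * p.1) domRT :=
    key_int _ ((((hrpowC (q-2)).mul hGc.continuousOn).pow 2).mul continuous_fst.continuousOn)
      (fun p hp => by rw [hz p.1 p.2 (houtside p hp)]; ring)
  have hWint : IntegrableOn
      (fun p : ℝ × ℝ => pdr g p.1 p.2 * (p.1 ^ (2*q-3) * g p.1 p.2) * p.1) domRT :=
    key_int _ ((hgrC.continuousOn.mul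
        ((hrpowC (2*q-3)).mul hGc.continuousOn)).mul continuous_fst.continuousOn)
      (fun p hp => by rw [hzr p.1 p.2 (houtside p hp)]; ring)
  have hsplit : (q-1) * (∫ p in domRT, (p.1 ^ (q-2) * g p.1 p.2)^2 * p.1)
      + (∫ p in domRT, pdr g p.1 p.2 * (p.1 ^ (2*q-3) * g p.1 p.2) * p.1) = 0 := by
    rw [← integral_const_mul, ← integral_add (hDint.const_mul (q-1)) hWint]
    exact hIBP
  -- nonnegativity of the squared norms
  have hA0 : 0 ≤ ∫ p in domRT, (pdr g p.1 p.2)^2 * p.1 :=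
    setIntegral_nonneg mdom (fun p hp => mul_nonneg (sq_nonneg _) (le_of_lt hp.1))
  have hB0 : 0 ≤ ∫ p in domRT, (g p.1 p.2 / p.1)^2 * p.1 :=
    setIntegral_nonneg mdom (fun p hp => mul_nonneg (sq_nonneg _) (le_of_lt hp.1))
  have hC0 : 0 ≤ ∫ p in domRT, (p.1 ^ (q-1) * g p.1 p.2)^2 * p.1 :=
    setIntegral_nonneg mdom (fun p hp => mul_nonneg (sq_nonneg _) (le_of_lt hp.1))
  -- Cauchy–Schwarz step
  set U : ℝ × ℝ → ℝ := fun p => pdr g p.1 p.2 * Real.sqrt p.1 with hU_def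
  set V : ℝ × ℝ → ℝ := fun p => p.1 ^ (2*q-3) * g p.1 p.2 * Real.sqrt p.1 with hV_def
  have hVcont : ContinuousOn V (Ioi 0 ×ˢ (univ : Set ℝ)) :=
    ((hrpowC (2*q-3)).mul hGc.continuousOn).mul
      (Real.continuous_sqrt.comp continuous_fst).continuousOn
  have hUmeas : AEStronglyMeasurable U (volume.restrict domRT) :=
    (hgrC.mul (Real.continuous_sqrt.comp continuous_fst)).aestronglyMeasurable
  have hVmeas : AEStronglyMeasurable V (volume.restrict domRT) :=
    (hVcont.mono (Set.prod_mono subset_rfl (subset_univ _))).aestronglyMeasurable mdom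
  have hU2int : IntegrableOn (fun p => U p ^ 2) domRT :=
    key_int _ (((hgrC.mul (Real.continuous_sqrt.comp continuous_fst)).pow 2).continuousOn)
      (fun p hp => by simp only [hU_def]; rw [hzr p.1 p.2 (houtside p hp)]; ring)
  have hV2int : IntegrableOn (fun p => V p ^ 2) domRT :=
    key_int _ (hVcont.pow 2)
      (fun p hp => by simp only [hV_def]; rw [hz p.1 p.2 (houtside p hp)]; ring)
  have hCS := my_cauchy_schwarz hUmeas hVmeas hU2int hV2int
  have hUVeq : (∫ p in domRT, U p * V p)
      = ∫ p in domRT, pdr g p.1 p.2 * (p.1 ^ (2*q-3) * g p.1 p.2) * p.1 := by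
    refine setIntegral_congr_fun mdom (fun p hp => ?_)
    have h := Real.mul_self_sqrt (le_of_lt hp.1)
    simp only [hU_def, hV_def]
    linear_combination (pdr g p.1 p.2 * (p.1 ^ (2*q-3) * g p.1 p.2)) * h
  have hU2eq : (∫ p in domRT, U p ^ 2) = ∫ p in domRT, (pdr g p.1 p.2)^2 * p.1 := by
    refine setIntegral_congr_fun mdom (fun p hp => ?_)
    simp only [hU_def]
    rw [mul_pow, Real.sq_sqrt (le_of_lt hp.1)]
  have hV2eq : (∫ p in domRT, V p ^ 2)
      = ∫ p in domRT, (p.1 ^ (2*q-3) * g p.1 p.2)^2 * p.1 := by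
    refine setIntegral_congr_fun mdom (fun p hp => ?_)
    simp only [hV_def]
    rw [mul_pow, Real.sq_sqrt (le_of_lt hp.1)]
  rw [hUVeq, hU2eq, hV2eq] at hCS
  have hIBP2 : (q-1) * (∫ p in domRT, (p.1 ^ (q-2) * g p.1 p.2)^2 * p.1) ≤
      Real.sqrt (∫ p in domRT, (pdr g p.1 p.2)^2 * p.1)
        * Real.sqrt (∫ p in domRT, (p.1 ^ (2*q-3) * g p.1 p.2)^2 * p.1) := by
    have h1 : (q-1) * (∫ p in domRT, (p.1 ^ (q-2) * g p.1 p.2)^2 * p.1)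
        = -(∫ p in domRT, pdr g p.1 p.2 * (p.1 ^ (2*q-3) * g p.1 p.2) * p.1) := by
      linarith [hsplit]
    rw [h1]
    exact (neg_le_abs _).trans hCS
  -- Hölder interpolation step
  set c : ℝ := (2-q)/q with hc_def
  have hc0 : 0 < c := div_pos (by linarith) hq0
  have hc1 : c < 1 := (div_lt_one hq0).mpr (by linarith)
  have hBae : 0 ≤ᵐ[volume.restrict domRT] (fun p : ℝ × ℝ => (g p.1 p.2 / p.1)^2 * p.1) := by
    filter_upwards [ae_restrict_mem mdom] with p hp
    exact mul_nonneg (sq_nonneg _) hp.1.le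
  have hCae : 0 ≤ᵐ[volume.restrict domRT]
      (fun p : ℝ × ℝ => (p.1 ^ (q-1) * g p.1 p.2)^2 * p.1) := by
    filter_upwards [ae_restrict_mem mdom] with p hp
    exact mul_nonneg (sq_nonneg _) hp.1.le
  have hBint : IntegrableOn (fun p : ℝ × ℝ => (g p.1 p.2 / p.1)^2 * p.1) domRT :=
    key_int _ ((((hGc.continuousOn.div continuous_fst.continuousOn
        (fun p hp => ne_of_gt hp.1)).pow 2).mul continuous_fst.continuousOn))
      (fun p hp => by rw [hz p.1 p.2 (houtside p hp)]; simp)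
  have hCint : IntegrableOn (fun p : ℝ × ℝ => (p.1 ^ (q-1) * g p.1 p.2)^2 * p.1) domRT :=
    key_int _ ((((hrpowC (q-1)).mul hGc.continuousOn).pow 2).mul continuous_fst.continuousOn)
      (fun p hp => by rw [hz p.1 p.2 (houtside p hp)]; ring)
  have hHold := my_holder_interp hc0 hc1 hBae hCae hBint hCint
  have hEeq : (∫ p in domRT, (p.1 ^ (2*q-3) * g p.1 p.2)^2 * p.1)
      = ∫ p in domRT, ((g p.1 p.2 / p.1)^2 * p.1) ^ c
          * ((p.1 ^ (q-1) * g p.1 p.2)^2 * p.1) ^ (1-c) := by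
    refine setIntegral_congr_fun mdom (fun p hp => ?_)
    have hr : (0:ℝ) < p.1 := hp.1
    rw [sqw p.1 _ _ hr, hdivw p.1 _ hr, sqw p.1 _ (q-1) hr,
      mulw _ p.1 _ _ c (sq_nonneg _) hr]
    have hce : (-1:ℝ) * c + (2*(q-1)+1)*(1-c) = 2*(2*q-3)+1 := by
      rw [hc_def]; field_simp; ring
    rw [hce]
  rw [← hEeq] at hHold
  -- combine
  have hsqrtE : Real.sqrt (∫ p in domRT, (p.1 ^ (2*q-3) * g p.1 p.2)^2 * p.1)
      ≤ Real.sqrt (∫ p in domRT, (g p.1 p.2 / p.1)^2 * p.1) ^ c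
        * Real.sqrt (∫ p in domRT, (p.1 ^ (q-1) * g p.1 p.2)^2 * p.1) ^ (1-c) := by
    have h1 : Real.sqrt ((∫ p in domRT, (g p.1 p.2 / p.1)^2 * p.1) ^ c
        * (∫ p in domRT, (p.1 ^ (q-1) * g p.1 p.2)^2 * p.1) ^ (1-c))
        = Real.sqrt (∫ p in domRT, (g p.1 p.2 / p.1)^2 * p.1) ^ c
          * Real.sqrt (∫ p in domRT, (p.1 ^ (q-1) * g p.1 p.2)^2 * p.1) ^ (1-c) := by
      rw [Real.sqrt_eq_rpow, Real.sqrt_eq_rpow, Real.sqrt_eq_rpow,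
        Real.mul_rpow (Real.rpow_nonneg hB0 _) (Real.rpow_nonneg hC0 _),
        ← Real.rpow_mul hB0 c (1/2), ← Real.rpow_mul hC0 (1-c) (1/2),
        mul_comm c (1/2), mul_comm (1-c) (1/2),
        Real.rpow_mul hB0 (1/2) c, Real.rpow_mul hC0 (1/2) (1-c)]
    calc Real.sqrt (∫ p in domRT, (p.1 ^ (2*q-3) * g p.1 p.2)^2 * p.1)
        ≤ Real.sqrt ((∫ p in domRT, (g p.1 p.2 / p.1)^2 * p.1) ^ c
            * (∫ p in domRT, (p.1 ^ (q-1) * g p.1 p.2)^2 * p.1) ^ (1-c)) :=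
          Real.sqrt_le_sqrt hHold
      _ = _ := h1
  have h1c : 2*(q-1)/q = 1 - c := by
    rw [hc_def]; field_simp; ring
  simp only [nrm2]
  rw [h1c]
  calc (q-1) * (∫ p in domRT, (p.1 ^ (q-2) * g p.1 p.2)^2 * p.1)
      ≤ Real.sqrt (∫ p in domRT, (pdr g p.1 p.2)^2 * p.1)
        * Real.sqrt (∫ p in domRT, (p.1 ^ (2*q-3) * g p.1 p.2)^2 * p.1) := hIBP2
    _ ≤ Real.sqrt (∫ p in domRT, (pdr g p.1 p.2)^2 * p.1)
        * (Real.sqrt (∫ p in domRT, (g p.1 p.2 / p.1)^2 * p.1) ^ c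
          * Real.sqrt (∫ p in domRT, (p.1 ^ (q-1) * g p.1 p.2)^2 * p.1) ^ (1-c)) :=
        mul_le_mul_of_nonneg_left hsqrtE (Real.sqrt_nonneg _)
    _ = _ := by ring
end
end
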